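/- For every p ≥ 1 there exists a constant C = C(p) > 0 such that for every x = (x₁, x₂) ∈ ℝ²₊ and every α > 0, one has ∫_{{y ∈ ℝ²₊ : 0 < y₂ ≤ α}} G(x, y)^p dy ≤ C · x₂^{1/2} · α^{3/2}, where G(x, y) = (1/(4π)) log(1 + 4x₂y₂/|x − y|²). -/

import Mathlib

/-!
On the strip, `|x - y|² ≥ (x₁ - y₁)²` and `y₂ ≤ α` give
`G(x, y) ≤ (1/4π) log (1 + c / (y₁ - x₁)²)` with `c = 4 x₂ α`, a bound depending on `y₁` only.
Integrating over `y₂ ∈ (0, α]` contributes a factor `α`, and the substitution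
`y₁ = x₁ + √c u` turns the `y₁`-integral into `√c ∫ log (1 + u⁻²) ^ p du`, which is finite for
`p > 1/2`: the integrand is `O(|u| ^ (-2p))` at infinity and `O(|u| ^ (-1/2))` at `0`.
As `√c = 2 √(x₂ α)`, the bound holds with `C = 2 (4π)^(-p) ∫ log (1 + u⁻²) ^ p du`.
-/

open MeasureTheory Real Set

noncomputable def G (x y : ℝ × ℝ) : ℝ :=
  (1 / (4 * π)) * Real.log (1 + 4 * x.2 * y.2 / ((x.1 - y.1)^2 + (x.2 - y.2)^2))

lemma integrable_of_even_of_integrableOn_Ioi {E : Type*} [NormedAddCommGroup E] {f : ℝ → E}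
    (heven : ∀ x, f (-x) = f x) (hf : IntegrableOn f (Ioi 0)) : Integrable f := by
  have hIio : IntegrableOn f (Iio 0) := by
    have h := (Measure.measurePreserving_neg (volume : Measure ℝ)).integrableOn_comp_preimage
      (Homeomorph.neg ℝ).measurableEmbedding (f := f) (s := Iio 0)
    rw [show f ∘ Neg.neg = f from funext heven] at h
    exact h.1 (by simpa using hf)
  rw [← integrableOn_univ, ← Iic_union_Ioi (a := (0 : ℝ)), integrableOn_union]
  exact ⟨by rwa [integrableOn_Iic_iff_integrableOn_Iio], hf⟩

section LogKernel

variable {p : ℝ}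

lemma log_one_add_one_div_sq_rpow_le_rpow (hp : 0 ≤ p) {u : ℝ} (hu : 0 < u) :
    log (1 + 1 / u ^ 2) ^ p ≤ u ^ (-(2 * p)) := by
  have hs : 0 < 1 / u ^ 2 := by positivity
  calc log (1 + 1 / u ^ 2) ^ p ≤ (1 / u ^ 2) ^ p := by
        refine rpow_le_rpow (log_nonneg (by linarith)) ?_ hp
        linarith [log_le_sub_one_of_pos (by linarith : 0 < 1 + 1 / u ^ 2)]
    _ = u ^ (-(2 * p)) := by
        rw [one_div, inv_rpow (by positivity), ← rpow_natCast, ← rpow_mul hu.le, rpow_neg hu.le]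
        norm_num

/-- Near `0`, use `log x ≤ x ^ ε / ε` with `ε = 1 / (4 p)`. -/
lemma log_one_add_one_div_sq_rpow_le_mul_rpow (hp : 0 < p) {u : ℝ} (hu0 : 0 < u) (hu1 : u ≤ 1) :
    log (1 + 1 / u ^ 2) ^ p ≤ (2 ^ (1 / 4 : ℝ) * (4 * p) ^ p) * u ^ (-(1 / 2) : ℝ) := by
  set ε := 1 / (4 * p)
  have hε : 0 < ε := by positivity
  have hx : 0 < 1 + 1 / u ^ 2 := by positivity
  have h2 : 1 + 1 / u ^ 2 ≤ 2 * u ^ (-2 : ℝ) := by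
    rw [rpow_neg hu0.le, rpow_two, two_mul, one_div]
    gcongr
    exact one_le_inv₀ (by positivity) |>.2 (pow_le_one₀ hu0.le hu1)
  calc log (1 + 1 / u ^ 2) ^ p ≤ ((1 + 1 / u ^ 2) ^ ε / ε) ^ p :=
        rpow_le_rpow (log_nonneg (le_add_of_nonneg_right (by positivity))) (log_le_rpow_div hx.le hε) hp.le
    _ = (1 + 1 / u ^ 2) ^ (1 / 4 : ℝ) * (4 * p) ^ p := by
        rw [div_rpow (by positivity) hε.le, ← rpow_mul hx.le, div_eq_mul_inv, ← inv_rpow hε.le]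
        congr 2
        · simp only [ε]; field_simp
        · simp [ε]
    _ ≤ (2 * u ^ (-2 : ℝ)) ^ (1 / 4 : ℝ) * (4 * p) ^ p := by gcongr
    _ = (2 ^ (1 / 4 : ℝ) * (4 * p) ^ p) * u ^ (-(1 / 2) : ℝ) := by
        rw [mul_rpow (by norm_num) (by positivity), ← rpow_mul hu0.le]
        norm_num
        ring

lemma integrableOn_log_one_add_one_div_sq_rpow_Ioi (hp : 1 / 2 < p) :
    IntegrableOn (fun u : ℝ => log (1 + 1 / u ^ 2) ^ p) (Ioi 0) := by
  have hmeas : AEStronglyMeasurable (fun u : ℝ => log (1 + 1 / u ^ 2) ^ p) :=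
    (by fun_prop : Measurable fun u : ℝ => log (1 + 1 / u ^ 2) ^ p).aestronglyMeasurable
  rw [← Ioc_union_Ioi_eq_Ioi zero_le_one, integrableOn_union]
  constructor
  · have hdom : IntegrableOn (fun u : ℝ => (2 ^ (1 / 4 : ℝ) * (4 * p) ^ p) * u ^ (-(1 / 2) : ℝ))
        (Ioc 0 1) :=
      ((intervalIntegrable_iff_integrableOn_Ioc_of_le zero_le_one).1
        (intervalIntegral.intervalIntegrable_rpow' (by norm_num))).const_mul _
    refine hdom.mono' hmeas.restrict ((ae_restrict_iff' measurableSet_Ioc).2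
      (Filter.Eventually.of_forall fun u ⟨hu0, hu1⟩ => ?_))
    rw [norm_of_nonneg (rpow_nonneg (log_nonneg (le_add_of_nonneg_right (by positivity))) _)]
    exact log_one_add_one_div_sq_rpow_le_mul_rpow (by linarith) hu0 hu1
  · refine (integrableOn_Ioi_rpow_of_lt (a := -(2 * p)) (by linarith) one_pos).mono' hmeas.restrict
      ((ae_restrict_iff' measurableSet_Ioi).2 (Filter.Eventually.of_forall fun u hu => ?_))
    rw [norm_of_nonneg (rpow_nonneg (log_nonneg (le_add_of_nonneg_right (by positivity))) _)]
    exact log_one_add_one_div_sq_rpow_le_rpow (by linarith) (zero_lt_one.trans hu)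

lemma integrable_log_one_add_one_div_sq_rpow (hp : 1 / 2 < p) :
    Integrable fun u : ℝ => log (1 + 1 / u ^ 2) ^ p :=
  integrable_of_even_of_integrableOn_Ioi (fun u => by simp only [even_two.neg_pow])
    (integrableOn_log_one_add_one_div_sq_rpow_Ioi hp)

lemma integral_log_one_add_one_div_sq_rpow_pos (hp : 1 / 2 < p) :
    0 < ∫ u : ℝ, log (1 + 1 / u ^ 2) ^ p := by
  have hpos : ∀ u : ℝ, u ≠ 0 → 0 < log (1 + 1 / u ^ 2) ^ p := fun u hu =>
    rpow_pos_of_pos (log_pos (lt_add_of_pos_right _ (by positivity))) _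
  rw [integral_pos_iff_support_of_nonneg (fun u => ?_) (integrable_log_one_add_one_div_sq_rpow hp)]
  · refine lt_of_lt_of_le (by simp) (measure_mono (s := Ioi 0) fun u hu => (hpos u ?_).ne')
    exact (mem_Ioi.1 hu).ne'
  · exact rpow_nonneg (log_nonneg (le_add_of_nonneg_right (by positivity))) _

lemma div_sqrt_mul_sq {c : ℝ} (hc : 0 < c) (u : ℝ) : c / (√c * u) ^ 2 = 1 / u ^ 2 := by
  rw [mul_pow, sq_sqrt hc.le, ← div_div, div_self hc.ne']

lemma integrable_log_one_add_div_sq_sub_rpow (hp : 1 / 2 < p) {c : ℝ} (hc : 0 < c) (a : ℝ) :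
    Integrable fun t : ℝ => log (1 + c / (t - a) ^ 2) ^ p := by
  have h := integrable_log_one_add_one_div_sq_rpow hp
  simp only [← div_sqrt_mul_sq hc] at h
  rw [integrable_comp_mul_left_iff (fun t => log (1 + c / t ^ 2) ^ p) (sqrt_pos.2 hc).ne'] at h
  exact h.comp_sub_right a

lemma integral_log_one_add_div_sq_sub_rpow {c : ℝ} (hc : 0 < c) (a : ℝ) :
    ∫ t : ℝ, log (1 + c / (t - a) ^ 2) ^ p = √c * ∫ u : ℝ, log (1 + 1 / u ^ 2) ^ p := by
  have h := Measure.integral_comp_mul_left (fun t : ℝ => log (1 + c / t ^ 2) ^ p) √c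
  simp only [div_sqrt_mul_sq hc] at h
  rw [integral_sub_right_eq_self (fun t => log (1 + c / t ^ 2) ^ p) a, h, smul_eq_mul,
    abs_of_pos (inv_pos.2 (sqrt_pos.2 hc)), mul_inv_cancel_left₀ (sqrt_pos.2 hc).ne']

end LogKernel

lemma volume_restrict_strip (α : ℝ) :
    volume.restrict {y : ℝ × ℝ | 0 < y.2 ∧ y.2 ≤ α} = volume.prod (volume.restrict (Ioc 0 α)) := by
  have : {y : ℝ × ℝ | 0 < y.2 ∧ y.2 ≤ α} = univ ×ˢ Ioc 0 α := by ext; simp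
  rw [this, Measure.volume_eq_prod, ← Measure.prod_restrict, Measure.restrict_univ]

lemma G_nonneg {x y : ℝ × ℝ} (hx : 0 ≤ x.2) (hy : 0 ≤ y.2) : 0 ≤ G x y :=
  mul_nonneg (by positivity) (log_nonneg (le_add_of_nonneg_right (by positivity)))

lemma G_le_log_one_add_div_sq {x y : ℝ × ℝ} {α : ℝ} (hx : 0 ≤ x.2) (hy : 0 ≤ y.2) (hyα : y.2 ≤ α)
    (hne : y.1 ≠ x.1) : G x y ≤ 1 / (4 * π) * log (1 + 4 * x.2 * α / (y.1 - x.1) ^ 2) := by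
  have h1 : 0 < (y.1 - x.1) ^ 2 := by have := sub_ne_zero.2 hne; positivity
  unfold G
  gcongr ?_ * log (1 + ?_)
  have hα : 0 ≤ α := hy.trans hyα
  refine div_le_div₀ (by positivity) (by gcongr) h1 ?_
  nlinarith [sq_nonneg (x.2 - y.2)]

theorem integral_strip_G_rpow_le {p : ℝ} (hp : 1 / 2 < p) {x : ℝ × ℝ} (hx : 0 < x.2) {α : ℝ}
    (hα : 0 < α) :
    ∫ y in {y : ℝ × ℝ | 0 < y.2 ∧ y.2 ≤ α}, G x y ^ p ≤
      (1 / (4 * π)) ^ p * (2 * ∫ u : ℝ, log (1 + 1 / u ^ 2) ^ p) * x.2 ^ (1 / 2 : ℝ) *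
        α ^ (3 / 2 : ℝ) := by
  set c := 4 * x.2 * α
  have hc : 0 < c := by positivity
  set K := ∫ u : ℝ, log (1 + 1 / u ^ 2) ^ p
  set g : ℝ → ℝ := fun t => (1 / (4 * π)) ^ p * log (1 + c / (t - x.1) ^ 2) ^ p
  have hae : ∀ᵐ y ∂volume.prod (volume.restrict (Ioc 0 α)), y.2 ∈ Ioc 0 α ∧ y.1 ≠ x.1 :=
    (Measure.quasiMeasurePreserving_snd.ae (ae_restrict_mem measurableSet_Ioc)).and
      (Measure.quasiMeasurePreserving_fst.ae (Measure.ae_ne volume x.1))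
  have hsqrt : √c = 2 * x.2 ^ (1 / 2 : ℝ) * α ^ (1 / 2 : ℝ) := by
    rw [← sqrt_eq_rpow, ← sqrt_eq_rpow, sqrt_mul (by positivity), sqrt_mul (by norm_num),
      show (4 : ℝ) = 2 ^ 2 by norm_num, sqrt_sq zero_le_two]
  have hα32 : α ^ (3 / 2 : ℝ) = α * α ^ (1 / 2 : ℝ) := by
    rw [show (3 / 2 : ℝ) = 1 + 1 / 2 by norm_num, rpow_add hα, rpow_one]
  rw [volume_restrict_strip]
  calc ∫ y, G x y ^ p ∂volume.prod (volume.restrict (Ioc 0 α))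
      ≤ ∫ y, g y.1 ∂volume.prod (volume.restrict (Ioc 0 α)) := by
        refine integral_mono_of_nonneg ?_
          (((integrable_log_one_add_div_sq_sub_rpow hp hc x.1).const_mul _).comp_fst _) ?_
        · filter_upwards [hae] with y hy
          exact rpow_nonneg (G_nonneg hx.le hy.1.1.le) _
        · filter_upwards [hae] with y ⟨⟨hy0, hyα⟩, hne⟩
          simp only [g]
          rw [← mul_rpow (by positivity) (log_nonneg (le_add_of_nonneg_right (by positivity)))]
          exact rpow_le_rpow (G_nonneg hx.le hy0.le) (G_le_log_one_add_div_sq hx.le hy0.le hyα hne)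
            (by linarith)
    _ = α * ((1 / (4 * π)) ^ p * (√c * K)) := by
        rw [integral_fun_fst, integral_const_mul, integral_log_one_add_div_sq_sub_rpow hc,
          measureReal_restrict_apply_univ, volume_real_Ioc_of_le hα.le, sub_zero, smul_eq_mul]
    _ = (1 / (4 * π)) ^ p * (2 * K) * x.2 ^ (1 / 2 : ℝ) * α ^ (3 / 2 : ℝ) := by
        rw [hsqrt, hα32]
        ring

theorem greens_function_strip_bound (p : ℝ) (hp : 1 ≤ p) :
    ∃ C : ℝ, 0 < C ∧ ∀ x : ℝ × ℝ, 0 < x.2 → ∀ α : ℝ, 0 < α →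
      (∫ y in {y : ℝ × ℝ | 0 < y.2 ∧ y.2 ≤ α}, (G x y) ^ p)
        ≤ C * x.2 ^ (1/2 : ℝ) * α ^ (3/2 : ℝ) := by
  have hp_half : 1 / 2 < p := by linarith
  have hK := integral_log_one_add_one_div_sq_rpow_pos hp_half
  exact ⟨(1 / (4 * π)) ^ p * (2 * ∫ u : ℝ, log (1 + 1 / u ^ 2) ^ p), by positivity,
    fun x hx α hα => integral_strip_G_rpow_le hp_half hx hα⟩
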